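/- arXiv:1012.1793 — 4 statements merged into one kernel-verified Lean document; each statement's English description precedes it below -/
import Mathlib

section
/- Under the Setup, fix 0 ≤ t < T. If φ is strictly decreasing on [0,∞), then the function ξ ↦ P(t,T,ξ) is strictly decreasing on ℝ; if φ is strictly increasing on [0,∞), then ξ ↦ P(t,T,ξ) is strictly increasing on ℝ. -/
open MeasureTheory Real

/-- `D(t,T,ξ) = ∫_T^∞ ρ s * exp (φ s * ξ - ψ (φ s) * t) ds`. -/
noncomputable def Dfun (ρ φ ψ : ℝ → ℝ) (t T ξ : ℝ) : ℝ :=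
  ∫ s in Set.Ioi T, ρ s * Real.exp (φ s * ξ - ψ (φ s) * t)

/-- The bond price function `P(t,T,ξ) = D(t,T,ξ) / D(t,t,ξ)`. -/
noncomputable def Pfun (ρ φ ψ : ℝ → ℝ) (t T ξ : ℝ) : ℝ :=
  Dfun ρ φ ψ t T ξ / Dfun ρ φ ψ t t ξ

/-- `Φ(t,T,ξ)`, the weighted average of `φ s` for `s ≥ T`. -/
noncomputable def PhiFun (ρ φ ψ : ℝ → ℝ) (t T ξ : ℝ) : ℝ :=
  (∫ s in Set.Ioi T, φ s * ρ s * Real.exp (φ s * ξ - ψ (φ s) * t)) / Dfun ρ φ ψ t T ξ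

/-- The instantaneous forward rate `f(t,T,ξ)`. -/
noncomputable def fwdFun (ρ φ ψ : ℝ → ℝ) (t T ξ : ℝ) : ℝ :=
  ρ T * Real.exp (φ T * ξ - ψ (φ T) * t) / Dfun ρ φ ψ t T ξ

/-!
Write `P = A / (B + A)` with `A = ∫_T^∞ g` and `B = ∫_t^T g`, where `g` is the integrand of `D`.
Shifting `ξ` to `ξ + Δ` (`Δ > 0`) multiplies `g s` by `exp (φ s Δ)`. For decreasing `φ` this
factor is at most `exp (φ T Δ)` on `(T, ∞)` and strictly larger on `(t, T)`, so `A` grows by a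
factor at most `exp (φ T Δ)` while `B` grows by a strictly larger one, and `P` decreases.
The increasing case reduces to this one via `(φ, ψ, ξ) ↦ (-φ, ψ ∘ neg, -ξ)`.
-/

open Set

theorem setIntegral_pos_of_forall_pos {X : Type*} [MeasurableSpace X] {μ : Measure X}
    {f : X → ℝ} {S : Set X} (hS : MeasurableSet S) (hμS : μ S ≠ 0) (hf : IntegrableOn f S μ)
    (hpos : ∀ x ∈ S, 0 < f x) : 0 < ∫ x in S, f x ∂μ := by
  have hnonneg : 0 ≤ᵐ[μ.restrict S] f :=
    (ae_restrict_iff' hS).2 (ae_of_all _ fun x hx ↦ (hpos x hx).le)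
  rw [setIntegral_pos_iff_support_of_nonneg_ae hnonneg hf,
    inter_eq_self_of_subset_right fun x hx ↦ Function.mem_support.2 (hpos x hx).ne']
  exact pos_iff_ne_zero.2 hμS

theorem div_add_lt_div_add_of_le_mul_of_mul_lt {a₁ a₂ b₁ b₂ c : ℝ} (ha₁ : 0 < a₁) (ha₂ : 0 < a₂)
    (hb₁ : 0 < b₁) (hb₂ : 0 < b₂) (ha : a₂ ≤ c * a₁) (hb : c * b₁ < b₂) :
    a₂ / (b₂ + a₂) < a₁ / (b₁ + a₁) := by
  rw [div_lt_div_iff₀ (by positivity) (by positivity)]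
  nlinarith [mul_le_mul_of_nonneg_right ha hb₁.le, mul_lt_mul_of_pos_left hb ha₁]

-- `Dfun ρ φ ψ t T ξ` is definitionally `∫ s in Ioi T, bondDensity ρ φ ψ t ξ s`.
noncomputable def bondDensity (ρ φ ψ : ℝ → ℝ) (t ξ s : ℝ) : ℝ :=
  ρ s * exp (φ s * ξ - ψ (φ s) * t)

section bondDensity

variable {ρ φ ψ : ℝ → ℝ} {t c Δ : ℝ} {S : Set ℝ}

theorem bondDensity_pos {ξ s : ℝ} (hρ : 0 < ρ s) : 0 < bondDensity ρ φ ψ t ξ s :=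
  mul_pos hρ (exp_pos _)

theorem bondDensity_add (ξ s : ℝ) :
    bondDensity ρ φ ψ t (ξ + Δ) s = exp (φ s * Δ) * bondDensity ρ φ ψ t ξ s := by
  simp only [bondDensity]
  rw [mul_left_comm, ← exp_add]
  ring_nf

theorem integrableOn_bondDensity {C : ℝ} (hρ : IntegrableOn ρ S)
    (hφm : AEStronglyMeasurable φ (volume.restrict S)) (hφb : ∀ s ∈ S, |φ s| ≤ C)
    (hψ : Continuous ψ) (hS : MeasurableSet S) (ξ : ℝ) :
    IntegrableOn (bondDensity ρ φ ψ t ξ) S := by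
  obtain ⟨M, hM⟩ := (isCompact_Icc (a := -C) (b := C)).exists_bound_of_continuousOn hψ.continuousOn
  refine hρ.mul_bdd (c := exp (C * |ξ| + M * |t|)) ?_ ?_
  · exact continuous_exp.comp_aestronglyMeasurable
      ((hφm.mul_const ξ).sub ((hψ.comp_aestronglyMeasurable hφm).mul_const t))
  · filter_upwards [ae_restrict_mem hS] with s hs
    have hφs := hφb s hs
    have hψs : |ψ (φ s)| ≤ M := hM _ (abs_le.1 hφs)
    rw [norm_of_nonneg (exp_pos _).le, exp_le_exp]
    calc φ s * ξ - ψ (φ s) * t ≤ |φ s| * |ξ| + |ψ (φ s)| * |t| := by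
          rw [← abs_mul, ← abs_mul]
          linarith [le_abs_self (φ s * ξ), neg_abs_le (ψ (φ s) * t)]
      _ ≤ C * |ξ| + M * |t| := by gcongr

theorem setIntegral_bondDensity_add_le (hS : MeasurableSet S)
    (hint : ∀ ξ, IntegrableOn (bondDensity ρ φ ψ t ξ) S) (hρ : ∀ s ∈ S, 0 ≤ ρ s)
    (hφ : ∀ s ∈ S, φ s ≤ c) (hΔ : 0 ≤ Δ) (ξ : ℝ) :
    ∫ s in S, bondDensity ρ φ ψ t (ξ + Δ) s ≤ exp (c * Δ) * ∫ s in S, bondDensity ρ φ ψ t ξ s := by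
  rw [← integral_const_mul]
  refine setIntegral_mono_on (hint _) ((hint ξ).const_mul _) hS fun s hs ↦ ?_
  rw [bondDensity_add]
  exact mul_le_mul_of_nonneg_right (exp_le_exp.2 (mul_le_mul_of_nonneg_right (hφ s hs) hΔ))
    (mul_nonneg (hρ s hs) (exp_pos _).le)

theorem lt_setIntegral_bondDensity_add (hS : MeasurableSet S) (hS₀ : volume S ≠ 0)
    (hint : ∀ ξ, IntegrableOn (bondDensity ρ φ ψ t ξ) S) (hρ : ∀ s ∈ S, 0 < ρ s)
    (hφ : ∀ s ∈ S, c < φ s) (hΔ : 0 < Δ) (ξ : ℝ) :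
    exp (c * Δ) * ∫ s in S, bondDensity ρ φ ψ t ξ s < ∫ s in S, bondDensity ρ φ ψ t (ξ + Δ) s := by
  rw [← sub_pos, ← integral_const_mul, ← integral_sub (hint _) ((hint ξ).const_mul _)]
  refine setIntegral_pos_of_forall_pos hS hS₀ ((hint _).sub ((hint ξ).const_mul _)) fun s hs ↦ ?_
  rw [bondDensity_add, ← sub_mul]
  exact mul_pos (sub_pos.2 (exp_lt_exp.2 (mul_lt_mul_of_pos_right (hφ s hs) hΔ)))
    (bondDensity_pos (hρ s hs))

theorem Dfun_eq_setIntegral_Ioo_add {u T ξ : ℝ}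
    (hint : IntegrableOn (bondDensity ρ φ ψ t ξ) (Ioi u)) (huT : u < T) :
    Dfun ρ φ ψ t u ξ = (∫ s in Ioo u T, bondDensity ρ φ ψ t ξ s) + Dfun ρ φ ψ t T ξ := by
  have hunion := setIntegral_union ((Iio_disjoint_Ici le_rfl).mono_left Ioo_subset_Iio_self)
    measurableSet_Ici (hint.mono_set Ioo_subset_Ioi_self) (hint.mono_set (Ici_subset_Ioi.2 huT))
  rwa [Ioo_union_Ici_eq_Ioi huT, integral_Ici_eq_integral_Ioi] at hunion

theorem Pfun_strictAnti {T C : ℝ} (hρ : IntegrableOn ρ (Ioi t)) (hρpos : ∀ s ∈ Ioi t, 0 < ρ s)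
    (hφb : ∀ s ∈ Ioi t, |φ s| ≤ C) (hψ : Continuous ψ) (hφ : StrictAntiOn φ (Ioi t))
    (htT : t < T) : StrictAnti (Pfun ρ φ ψ t T) := by
  have hint : ∀ ξ, IntegrableOn (bondDensity ρ φ ψ t ξ) (Ioi t) := integrableOn_bondDensity hρ
    (aemeasurable_restrict_of_antitoneOn measurableSet_Ioi hφ.antitoneOn).aestronglyMeasurable
    hφb hψ measurableSet_Ioi
  have hsubT : Ioi T ⊆ Ioi t := Ioi_subset_Ioi htT.le
  have hA : ∀ ξ, 0 < Dfun ρ φ ψ t T ξ := fun ξ ↦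
    setIntegral_pos_of_forall_pos measurableSet_Ioi (by simp) ((hint ξ).mono_set hsubT)
      fun s hs ↦ bondDensity_pos (hρpos s (hsubT hs))
  have hB : ∀ ξ, 0 < ∫ s in Ioo t T, bondDensity ρ φ ψ t ξ s := fun ξ ↦
    setIntegral_pos_of_forall_pos measurableSet_Ioo (by simp [htT])
      ((hint ξ).mono_set Ioo_subset_Ioi_self) fun s hs ↦ bondDensity_pos (hρpos s hs.1)
  intro ξ ξ' hξ
  obtain ⟨Δ, hΔ, rfl⟩ : ∃ Δ, 0 < Δ ∧ ξ' = ξ + Δ := ⟨ξ' - ξ, sub_pos.2 hξ, by ring⟩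
  simp only [Pfun, Dfun_eq_setIntegral_Ioo_add (hint _) htT]
  exact div_add_lt_div_add_of_le_mul_of_mul_lt (hA _) (hA _) (hB _) (hB _)
    (setIntegral_bondDensity_add_le measurableSet_Ioi (fun ξ ↦ (hint ξ).mono_set hsubT)
      (fun s hs ↦ (hρpos s (hsubT hs)).le) (fun s hs ↦ (hφ htT (hsubT hs) hs).le) hΔ.le ξ)
    (lt_setIntegral_bondDensity_add measurableSet_Ioo (by simp [htT])
      (fun ξ ↦ (hint ξ).mono_set Ioo_subset_Ioi_self) (fun s hs ↦ hρpos s hs.1)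
      (fun s hs ↦ hφ hs.1 htT hs.2) hΔ ξ)

theorem Pfun_neg (T ξ : ℝ) :
    Pfun ρ (fun s ↦ -φ s) (fun x ↦ ψ (-x)) t T ξ = Pfun ρ φ ψ t T (-ξ) := by
  simp only [Pfun, Dfun, neg_mul, mul_neg, neg_neg]

end bondDensity

theorem bond_price_monotone_in_xi_general
    (ρ φ ψ : ℝ → ℝ)
    (hρpos : ∀ s : ℝ, 0 < s → 0 < ρ s)
    (hρint : ∫ s in Set.Ioi (0 : ℝ), ρ s = 1)
    (hφb : ∃ C : ℝ, ∀ s : ℝ, 0 ≤ s → |φ s| ≤ C)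
    (hψc : Continuous ψ)
    (t T : ℝ) (ht : 0 ≤ t) (htT : t < T) :
    (StrictAntiOn φ (Set.Ici 0) → StrictAnti fun ξ => Pfun ρ φ ψ t T ξ) ∧
    (StrictMonoOn φ (Set.Ici 0) → StrictMono fun ξ => Pfun ρ φ ψ t T ξ) := by
  obtain ⟨C, hC⟩ := hφb
  have hsub : Ioi t ⊆ Ici 0 := Ioi_subset_Ici ht
  have hρ : IntegrableOn ρ (Ioi t) :=
    IntegrableOn.mono_set (integrable_of_integral_eq_one hρint) (Ioi_subset_Ioi ht)
  have hρpos' : ∀ s ∈ Ioi t, 0 < ρ s := fun s hs ↦ hρpos s (ht.trans_lt hs)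
  have hφb : ∀ s ∈ Ioi t, |φ s| ≤ C := fun s hs ↦ hC s (hsub hs)
  refine ⟨fun hφ ↦ Pfun_strictAnti hρ hρpos' hφb hψc (hφ.mono hsub) htT, fun hφ ξ ξ' hξ ↦ ?_⟩
  have hanti := Pfun_strictAnti (φ := fun s ↦ -φ s) (ψ := fun x ↦ ψ (-x)) hρ hρpos'
    (by simpa only [abs_neg] using hφb) (hψc.comp continuous_neg) (hφ.mono hsub).neg htT
  simpa only [Pfun_neg, neg_neg] using hanti (neg_lt_neg hξ)

/-- If `φ` is strictly decreasing on `[0,∞)` then `ξ ↦ P(t,T,ξ)` is strictly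
decreasing; if `φ` is strictly increasing on `[0,∞)` then `ξ ↦ P(t,T,ξ)` is
strictly increasing. -/
theorem bond_price_monotone_in_xi
    (ρ φ ψ : ℝ → ℝ)
    (hρc : ContinuousOn ρ (Set.Ioi 0)) (hρpos : ∀ s : ℝ, 0 < s → 0 < ρ s)
    (hρint : ∫ s in Set.Ioi (0 : ℝ), ρ s = 1)
    (hφc : ContinuousOn φ (Set.Ici 0)) (hφb : ∃ C : ℝ, ∀ s : ℝ, 0 ≤ s → |φ s| ≤ C)
    (hψc : Continuous ψ)
    (t T : ℝ) (ht : 0 ≤ t) (htT : t < T) :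
    (StrictAntiOn φ (Set.Ici 0) → StrictAnti fun ξ => Pfun ρ φ ψ t T ξ) ∧
    (StrictMonoOn φ (Set.Ici 0) → StrictMono fun ξ => Pfun ρ φ ψ t T ξ) :=
  bond_price_monotone_in_xi_general ρ φ ψ hρpos hρint hφb hψc t T ht htT
end

section
/- Under the Setup with ψ(α) = α²/2 (the geometric Brownian motion family), suppose that either φ_s > 0 for all s ≥ 0 and φ is strictly decreasing, or φ_s < 0 for all s ≥ 0 and φ is strictly increasing. Then for all 0 ≤ t < T and all ξ ∈ ℝ, the risk premium Φ(t,t,ξ) · (Φ(t,t,ξ) − Φ(t,T,ξ)) is strictly positive. -/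
/-!
`Φ(t,T,ξ)` is the average of `φ` over `(T, ∞)` against the positive weight
`w s = ρ s * exp (φ s * ξ - φ s ^ 2 / 2 * t)`, which is integrable because `φ` is bounded and `t ≥ 0`.
For `φ` positive and strictly decreasing, this average is positive, and splitting `(t, ∞)` at `T`
exhibits `Φ(t,t,ξ)` as a mixture of an average over `(t, T]`, which exceeds `φ T`, and `Φ(t,T,ξ)`,
which does not; hence `Φ(t,t,ξ) > Φ(t,T,ξ)`. The negative, increasing case follows by replacing `φ`
with `-φ` in the average, keeping the same weight.
-/

open MeasureTheory Real

open Set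

noncomputable def tailAverage (w f : ℝ → ℝ) (a : ℝ) : ℝ :=
  (∫ s in Ioi a, w s * f s) / ∫ s in Ioi a, w s

theorem PhiFun_eq_tailAverage (ρ φ ψ : ℝ → ℝ) (t T ξ : ℝ) :
    PhiFun ρ φ ψ t T ξ = tailAverage (fun s => ρ s * exp (φ s * ξ - ψ (φ s) * t)) φ T := by
  simp only [PhiFun, Dfun, tailAverage]
  congr 2
  funext s
  ring

theorem MeasureTheory.IntegrableOn.mul_continuousOn_of_abs_le {f g : ℝ → ℝ} {s : Set ℝ} {C : ℝ}
    (hf : IntegrableOn f s) (hs : MeasurableSet s) (hg : ContinuousOn g s)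
    (hC : ∀ x ∈ s, |g x| ≤ C) : IntegrableOn (fun x => f x * g x) s :=
  hf.mul_bdd (hg.aestronglyMeasurable hs) ((ae_restrict_iff' hs).2 (ae_of_all _ hC))

theorem setIntegral_Ioi_pos {f : ℝ → ℝ} {a : ℝ} (hf : IntegrableOn f (Ioi a))
    (hpos : ∀ x ∈ Ioi a, 0 < f x) : 0 < ∫ x in Ioi a, f x := by
  have hsupp : Ioi a ⊆ Function.support f := fun x hx => (hpos x hx).ne'
  rw [setIntegral_pos_iff_support_of_nonneg_ae
    ((ae_restrict_iff' measurableSet_Ioi).2 (ae_of_all _ fun x hx => (hpos x hx).le)) hf,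
    inter_eq_right.2 hsupp, volume_Ioi]
  exact ENNReal.zero_lt_top

section tailAverage

variable {w f : ℝ → ℝ}

theorem tailAverage_neg (a : ℝ) : tailAverage w (fun s => -f s) a = -tailAverage w f a := by
  simp only [tailAverage, mul_neg, integral_neg, neg_div]

theorem tailAverage_pos {a : ℝ} (hw : IntegrableOn w (Ioi a))
    (hwf : IntegrableOn (fun s => w s * f s) (Ioi a)) (hw_pos : ∀ s ∈ Ioi a, 0 < w s)
    (hf_pos : ∀ s ∈ Ioi a, 0 < f s) : 0 < tailAverage w f a :=
  div_pos (setIntegral_Ioi_pos hwf fun s hs => mul_pos (hw_pos s hs) (hf_pos s hs))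
    (setIntegral_Ioi_pos hw hw_pos)

theorem tailAverage_lt_tailAverage {t T : ℝ} (htT : t < T) (hw : IntegrableOn w (Ioi t))
    (hwf : IntegrableOn (fun s => w s * f s) (Ioi t)) (hw_pos : ∀ s ∈ Ioi t, 0 < w s)
    (hf : StrictAntiOn f (Ioi t)) : tailAverage w f T < tailAverage w f t := by
  have hIoi : Ioi T ⊆ Ioi t := Ioi_subset_Ioi htT.le
  have hinterval {g : ℝ → ℝ} (hg : IntegrableOn g (Ioi t)) : IntervalIntegrable g volume t T :=
    (intervalIntegrable_iff_integrableOn_Ioc_of_le htT.le).2 (hg.mono_set Ioc_subset_Ioi_self)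
  set A := ∫ s in t..T, w s
  set M := ∫ s in t..T, w s * f s
  set D := ∫ s in Ioi T, w s
  set N := ∫ s in Ioi T, w s * f s
  have hA : 0 < A := intervalIntegral.intervalIntegral_pos_of_pos_on (hinterval hw)
    (fun s hs => hw_pos s hs.1) htT
  have hD : 0 < D := setIntegral_Ioi_pos (hw.mono_set hIoi) fun s hs => hw_pos s (hIoi hs)
  have hM : f T * A < M := by
    have hpos : 0 < ∫ s in t..T, w s * f s - f T * w s :=
      intervalIntegral.intervalIntegral_pos_of_pos_on
        ((hinterval hwf).sub ((hinterval hw).const_mul _))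
        (fun s hs => by
          rw [← mul_comm (w s), ← mul_sub]
          exact mul_pos (hw_pos s hs.1) (sub_pos.2 (hf hs.1 (mem_Ioi.2 htT) hs.2))) htT
    rwa [intervalIntegral.integral_sub (hinterval hwf) ((hinterval hw).const_mul _),
      intervalIntegral.integral_const_mul, sub_pos] at hpos
  have hN : N ≤ f T * D := by
    rw [← integral_const_mul]
    refine setIntegral_mono_on (hwf.mono_set hIoi) ((hw.mono_set hIoi).const_mul _)
      measurableSet_Ioi fun s hs => ?_
    rw [mul_comm (f T)]
    exact mul_le_mul_of_nonneg_left (hf (mem_Ioi.2 htT) (hIoi hs) hs).le (hw_pos s (hIoi hs)).le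
  have hsplit_w : ∫ s in Ioi t, w s = A + D :=
    (intervalIntegral.integral_interval_add_Ioi hw (hw.mono_set hIoi)).symm
  have hsplit_wf : ∫ s in Ioi t, w s * f s = M + N :=
    (intervalIntegral.integral_interval_add_Ioi hwf (hwf.mono_set hIoi)).symm
  rw [tailAverage, tailAverage, hsplit_w, hsplit_wf, div_lt_div_iff₀ hD (by positivity)]
  nlinarith [mul_le_mul_of_nonneg_right hN hA.le, mul_lt_mul_of_pos_right hM hD]

end tailAverage

theorem integrableOn_Ioi_mul_exp {ρ φ : ℝ → ℝ} {C : ℝ} (hρ : IntegrableOn ρ (Ioi 0))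
    (hφc : ContinuousOn φ (Ici 0)) (hC : ∀ s, 0 ≤ s → |φ s| ≤ C) {t : ℝ} (ht : 0 ≤ t) (ξ : ℝ) :
    IntegrableOn (fun s => ρ s * exp (φ s * ξ - φ s ^ 2 / 2 * t)) (Ioi 0) := by
  have hφc' : ContinuousOn φ (Ioi 0) := hφc.mono Ioi_subset_Ici_self
  refine hρ.mul_continuousOn_of_abs_le measurableSet_Ioi (C := exp (C * |ξ|)) (by fun_prop)
    fun s hs => ?_
  have hexp : φ s * ξ - φ s ^ 2 / 2 * t ≤ C * |ξ| :=
    calc φ s * ξ - φ s ^ 2 / 2 * t ≤ |φ s| * |ξ| := by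
          nlinarith [abs_mul (φ s) ξ, le_abs_self (φ s * ξ), mul_nonneg (sq_nonneg (φ s)) ht]
      _ ≤ C * |ξ| := mul_le_mul_of_nonneg_right (hC s (le_of_lt hs)) (abs_nonneg ξ)
  rw [abs_of_pos (exp_pos _)]
  exact exp_le_exp.2 hexp

theorem risk_premium_positive_GBM_general
    (ρ φ : ℝ → ℝ)
    (hρpos : ∀ s : ℝ, 0 < s → 0 < ρ s)
    (hρint : ∫ s in Set.Ioi (0 : ℝ), ρ s = 1)
    (hφc : ContinuousOn φ (Set.Ici 0)) (hφb : ∃ C : ℝ, ∀ s : ℝ, 0 ≤ s → |φ s| ≤ C)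
    (hφ : ((∀ s : ℝ, 0 ≤ s → 0 < φ s) ∧ StrictAntiOn φ (Set.Ici 0)) ∨
          ((∀ s : ℝ, 0 ≤ s → φ s < 0) ∧ StrictMonoOn φ (Set.Ici 0))) :
    ∀ t T ξ : ℝ, 0 ≤ t → t < T →
      0 < PhiFun ρ φ (fun α => α ^ 2 / 2) t t ξ *
        (PhiFun ρ φ (fun α => α ^ 2 / 2) t t ξ -
          PhiFun ρ φ (fun α => α ^ 2 / 2) t T ξ) := by
  intro t T ξ ht htT
  obtain ⟨C, hC⟩ := hφb
  have hρ : IntegrableOn ρ (Ioi 0) := Integrable.of_integral_ne_zero (by simp [hρint])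
  simp only [PhiFun_eq_tailAverage]
  set w := fun s => ρ s * exp (φ s * ξ - φ s ^ 2 / 2 * t)
  have hw₀ : IntegrableOn w (Ioi 0) := integrableOn_Ioi_mul_exp hρ hφc hC ht ξ
  have hw : IntegrableOn w (Ioi t) := hw₀.mono_set (Ioi_subset_Ioi ht)
  have hwφ : IntegrableOn (fun s => w s * φ s) (Ioi t) :=
    (hw₀.mul_continuousOn_of_abs_le measurableSet_Ioi (hφc.mono Ioi_subset_Ici_self)
      fun s hs => hC s hs.out.le).mono_set (Ioi_subset_Ioi ht)
  have hw_pos : ∀ s ∈ Ioi t, 0 < w s := fun s hs => mul_pos (hρpos s (ht.trans_lt hs)) (exp_pos _)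
  have hIoi : Ioi t ⊆ Ici 0 := Ioi_subset_Ici ht
  rcases hφ with ⟨hpos, hanti⟩ | ⟨hneg, hmono⟩
  · exact mul_pos (tailAverage_pos hw hwφ hw_pos fun s hs => hpos s (hIoi hs))
      (sub_pos.2 (tailAverage_lt_tailAverage htT hw hwφ hw_pos (hanti.mono hIoi)))
  · have hwφ' : IntegrableOn (fun s => w s * -φ s) (Ioi t) := by
      simpa only [Pi.neg_def, mul_neg] using hwφ.neg
    have h₁ := tailAverage_pos hw hwφ' hw_pos fun s hs => neg_pos.2 (hneg s (hIoi hs))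
    have h₂ := tailAverage_lt_tailAverage htT hw hwφ' hw_pos (hmono.neg.mono hIoi)
    simp only [tailAverage_neg] at h₁ h₂
    exact mul_pos_of_neg_of_neg (by linarith) (by linarith)

/-- Positivity of the risk premium in the geometric Brownian motion family
(`ψ α = α² / 2`): if `φ` is positive and strictly decreasing, or negative and
strictly increasing, then `Φ(t,t,ξ) * (Φ(t,t,ξ) - Φ(t,T,ξ)) > 0`. -/
theorem risk_premium_positive_GBM
    (ρ φ : ℝ → ℝ)
    (hρc : ContinuousOn ρ (Set.Ioi 0)) (hρpos : ∀ s : ℝ, 0 < s → 0 < ρ s)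
    (hρint : ∫ s in Set.Ioi (0 : ℝ), ρ s = 1)
    (hφc : ContinuousOn φ (Set.Ici 0)) (hφb : ∃ C : ℝ, ∀ s : ℝ, 0 ≤ s → |φ s| ≤ C)
    (hφ : ((∀ s : ℝ, 0 ≤ s → 0 < φ s) ∧ StrictAntiOn φ (Set.Ici 0)) ∨
          ((∀ s : ℝ, 0 ≤ s → φ s < 0) ∧ StrictMonoOn φ (Set.Ici 0))) :
    ∀ t T ξ : ℝ, 0 ≤ t → t < T →
      0 < PhiFun ρ φ (fun α => α ^ 2 / 2) t t ξ *
        (PhiFun ρ φ (fun α => α ^ 2 / 2) t t ξ -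
          PhiFun ρ φ (fun α => α ^ 2 / 2) t T ξ) :=
  risk_premium_positive_GBM_general ρ φ hρpos hρint hφc hφb hφ
end

section
/- Under the Setup with ψ(α) = α²/2, let 0 < t < T, let K ∈ (0,1), assume φ_s > 0 for all s and φ is strictly decreasing, and suppose ξ* ∈ ℝ satisfies P(t,T,ξ*) = K. Let μ denote the Gaussian measure on ℝ with mean 0 and variance t. Then ∫_ℝ max(∫_T^∞ ρ_s exp(φ_s x − φ_s² t/2) ds − K ∫_t^∞ ρ_s exp(φ_s x − φ_s² t/2) ds, 0) dμ(x) = ∫_T^∞ ρ_s N(ξ*/√t − φ_s √t) ds − K ∫_t^∞ ρ_s N(ξ*/√t − φ_s √t) ds, where N is the standard normal cumulative distribution function. -/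
open MeasureTheory Real

open ProbabilityTheory

/-- The standard normal cumulative distribution function. -/
noncomputable def stdNormalCDF (x : ℝ) : ℝ :=
  ∫ u in Set.Iic x, (Real.sqrt (2 * Real.pi))⁻¹ * Real.exp (-u ^ 2 / 2)

/-!
Since `φ` is decreasing, the ratio `P(t,T,x) = D(t,T,x) / D(t,t,x)` is decreasing in `x`
(splitting `(t,∞)` at `T`, this is a rearrangement inequality for the kernel
`exp (φ s * x)`), so the payoff vanishes for `x > ξ*` and equals `D(t,T,x) - K D(t,t,x)`
for `x ≤ ξ*`. After exchanging the `x`- and `s`-integrals, each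
`s` contributes `ρ s ∫_{x ≤ ξ*} exp (φ s x - φ s² t / 2) dN(0,t)`, and the exponential
tilt turns `N(0,t)` into `N(φ s t, t)`, whose mass on `(-∞, ξ*]` is
`N(ξ*/√t - φ s √t)`.
-/

open Set
open scoped NNReal

lemma stdNormalCDF_eq_measureReal (x : ℝ) :
    stdNormalCDF x = (gaussianReal 0 1).real (Iic x) := by
  rw [measureReal_def, gaussianReal_apply_eq_integral _ one_ne_zero, ENNReal.toReal_ofReal
    (setIntegral_nonneg measurableSet_Iic fun _ _ ↦ gaussianPDFReal_nonneg _ _ _)]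
  simp [stdNormalCDF, gaussianPDFReal]

lemma stdNormalCDF_nonneg (x : ℝ) : 0 ≤ stdNormalCDF x := by
  rw [stdNormalCDF_eq_measureReal]; exact measureReal_nonneg

lemma stdNormalCDF_le_one (x : ℝ) : stdNormalCDF x ≤ 1 := by
  rw [stdNormalCDF_eq_measureReal]; exact measureReal_le_one

lemma stdNormalCDF_monotone : Monotone stdNormalCDF := fun x y hxy ↦ by
  simp only [stdNormalCDF_eq_measureReal]
  exact measureReal_mono (Iic_subset_Iic.mpr hxy)

lemma measureReal_gaussianReal_Iic (m : ℝ) {v : ℝ≥0} (hv : v ≠ 0) (c : ℝ) :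
    (gaussianReal m v).real (Iic c) = stdNormalCDF ((c - m) / √v) := by
  have hsv : 0 < √(v : ℝ) := Real.sqrt_pos.mpr (by positivity)
  have hmap : (gaussianReal 0 1).map (fun z ↦ √v * z + m) = gaussianReal m v := by
    rw [show (fun z ↦ √v * z + m) = (· + m) ∘ (√v * ·) from rfl,
      ← Measure.map_map (by fun_prop) (by fun_prop), gaussianReal_map_const_mul,
      gaussianReal_map_add_const]
    congr 1
    · simp
    · ext; simp [Real.sq_sqrt v.coe_nonneg]
  have hpre : (fun z ↦ √v * z + m) ⁻¹' Iic c = Iic ((c - m) / √v) := by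
    ext z; simp [le_div_iff₀ hsv]; constructor <;> intro h <;> linarith
  rw [stdNormalCDF_eq_measureReal, ← hmap,
    map_measureReal_apply (by fun_prop) measurableSet_Iic, hpre]

lemma setIntegral_gaussianReal_eq {μ : ℝ} {v : ℝ≥0} (hv : v ≠ 0) (f : ℝ → ℝ) {s : Set ℝ}
    (hs : MeasurableSet s) :
    ∫ x in s, f x ∂gaussianReal μ v = ∫ x in s, gaussianPDFReal μ v x * f x := by
  rw [← integral_indicator hs, integral_gaussianReal_eq_integral_smul hv, ← integral_indicator hs]
  congr 1 with x
  by_cases hx : x ∈ s <;> simp [hx]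

lemma gaussianPDFReal_mul_exp (v : ℝ≥0) (a x : ℝ) :
    gaussianPDFReal 0 v x * exp (a * x - a ^ 2 * v / 2) = gaussianPDFReal (a * v) v x := by
  by_cases hv : v = 0
  · simp [hv, gaussianPDFReal]
  have hv' : (v : ℝ) ≠ 0 := by exact_mod_cast hv
  rw [gaussianPDFReal, gaussianPDFReal, mul_assoc, ← exp_add]
  congr 2
  field_simp
  ring

lemma setIntegral_Iic_exp_gaussianReal {t : ℝ} (ht : 0 < t) (a c : ℝ) :
    ∫ x in Iic c, exp (a * x - a ^ 2 * t / 2) ∂gaussianReal 0 t.toNNReal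
      = stdNormalCDF (c / √t - a * √t) := by
  have hv : t.toNNReal ≠ 0 := by simpa using ht
  have htilt := gaussianPDFReal_mul_exp t.toNNReal a
  simp only [Real.coe_toNNReal _ ht.le] at htilt
  simp_rw [setIntegral_gaussianReal_eq hv _ measurableSet_Iic, htilt]
  rw [← ENNReal.toReal_ofReal (setIntegral_nonneg measurableSet_Iic fun _ _ ↦
      gaussianPDFReal_nonneg _ _ _), ← gaussianReal_apply_eq_integral _ hv, ← measureReal_def,
    measureReal_gaussianReal_Iic _ hv, Real.coe_toNNReal _ ht.le, sub_div, mul_div_assoc,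
    Real.div_sqrt]

section MixtureOfExponentials

variable {β : Type*} [MeasurableSpace β] {ν : Measure β} {ρ φ : β → ℝ} {t : ℝ}

lemma integrable_mul_exp_of_abs_le {C : ℝ} (hρ : Integrable ρ ν) (hφ : AEStronglyMeasurable φ ν)
    (hC : ∀ᵐ s ∂ν, |φ s| ≤ C) (ht : 0 ≤ t) (x : ℝ) :
    Integrable (fun s ↦ ρ s * exp (φ s * x - φ s ^ 2 * t / 2)) ν := by
  refine hρ.mul_bdd (c := exp (C * |x|))
    (hφ.aemeasurable.mul_const _ |>.sub ((hφ.aemeasurable.pow_const 2).mul_const t |>.div_const 2)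
      |>.exp).aestronglyMeasurable (hC.mono fun s hs ↦ ?_)
  rw [Real.norm_of_nonneg (exp_nonneg _), exp_le_exp]
  have hφx : φ s * x ≤ C * |x| := calc
    φ s * x ≤ |φ s| * |x| := by rw [← abs_mul]; exact le_abs_self _
    _ ≤ C * |x| := mul_le_mul_of_nonneg_right hs (abs_nonneg x)
  nlinarith [sq_nonneg (φ s)]

variable [SFinite ν]

lemma integrable_prod_gaussianReal_mul_exp (hρ : Integrable ρ ν) (hφ : AEStronglyMeasurable φ ν)
    (ht : 0 < t) (c : ℝ) :
    Integrable (fun p : ℝ × β ↦ ρ p.2 * exp (φ p.2 * p.1 - φ p.2 ^ 2 * t / 2))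
      (((gaussianReal 0 t.toNNReal).restrict (Iic c)).prod ν) := by
  have hmeas : AEStronglyMeasurable
      (fun p : ℝ × β ↦ ρ p.2 * exp (φ p.2 * p.1 - φ p.2 ^ 2 * t / 2))
      (((gaussianReal 0 t.toNNReal).restrict (Iic c)).prod ν) :=
    (hρ.1.aemeasurable.comp_snd.mul ((hφ.aemeasurable.comp_snd.mul measurable_fst.aemeasurable).sub
      (((hφ.aemeasurable.comp_snd.pow_const 2).mul_const t).div_const 2)).exp).aestronglyMeasurable
  refine (integrable_prod_iff' hmeas).mpr ⟨ae_of_all _ fun s ↦ ?_, ?_⟩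
  · simp_rw [exp_sub]
    exact (((integrable_exp_mul_gaussianReal (φ s)).div_const _).const_mul _).restrict
  · -- Tonelli: the `x`-integral of the norm is `‖ρ s‖ N(⋯) ≤ ‖ρ s‖`.
    have hnorm : ∀ s, ∫ x in Iic c, ‖ρ s * exp (φ s * x - φ s ^ 2 * t / 2)‖
        ∂gaussianReal 0 t.toNNReal = ‖ρ s‖ * stdNormalCDF (c / √t - φ s * √t) := fun s ↦ by
      simp_rw [norm_mul, Real.norm_eq_abs (exp _), abs_exp]
      rw [integral_const_mul, setIntegral_Iic_exp_gaussianReal ht]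
    simp_rw [hnorm]
    refine hρ.norm.mul_bdd ?_ (ae_of_all _ fun s ↦ ?_) (c := 1)
    · exact (stdNormalCDF_monotone.measurable.comp_aemeasurable
        ((hφ.aemeasurable.mul_const _).const_sub _)).aestronglyMeasurable
    · rw [Real.norm_of_nonneg (stdNormalCDF_nonneg _)]
      exact stdNormalCDF_le_one _

lemma setIntegral_Iic_gaussianReal_integral_mul_exp (hρ : Integrable ρ ν)
    (hφ : AEStronglyMeasurable φ ν) (ht : 0 < t) (c : ℝ) :
    ∫ x in Iic c, (∫ s, ρ s * exp (φ s * x - φ s ^ 2 * t / 2) ∂ν) ∂gaussianReal 0 t.toNNReal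
      = ∫ s, ρ s * stdNormalCDF (c / √t - φ s * √t) ∂ν := by
  rw [integral_integral_swap (integrable_prod_gaussianReal_mul_exp hρ hφ ht c)]
  congr 1 with s
  rw [integral_const_mul, setIntegral_Iic_exp_gaussianReal ht]

lemma integrable_integral_mul_exp (hρ : Integrable ρ ν) (hφ : AEStronglyMeasurable φ ν)
    (ht : 0 < t) (c : ℝ) :
    Integrable (fun x ↦ ∫ s, ρ s * exp (φ s * x - φ s ^ 2 * t / 2) ∂ν)
      ((gaussianReal 0 t.toNNReal).restrict (Iic c)) :=
  (integrable_prod_gaussianReal_mul_exp hρ hφ ht c).integral_prod_left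

end MixtureOfExponentials

lemma integral_mul_integral_le {α β : Type*} [MeasurableSpace α] [MeasurableSpace β]
    {μ : Measure α} {ν : Measure β} {f f' : α → ℝ} {g g' : β → ℝ}
    (hf : Integrable f μ) (hf' : Integrable f' μ) (hg : Integrable g ν) (hg' : Integrable g' ν)
    (h : ∀ᵐ a ∂μ, ∀ᵐ b ∂ν, f a * g b ≤ f' a * g' b) :
    (∫ a, f a ∂μ) * ∫ b, g b ∂ν ≤ (∫ a, f' a ∂μ) * ∫ b, g' b ∂ν := by
  rw [← integral_mul_const, ← integral_mul_const]
  refine integral_mono_ae (hf.mul_const _) (hf'.mul_const _) (h.mono fun a ha ↦ ?_)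
  beta_reduce
  rw [← integral_const_mul, ← integral_const_mul]
  exact integral_mono_ae (hg.const_mul _) (hg'.const_mul _) ha

lemma max_sub_mul_eq_indicator {f g : ℝ → ℝ} {K ξ : ℝ} (hg : ∀ x, 0 < g x)
    (hfg : Antitone fun x ↦ f x / g x) (hξ : f ξ / g ξ = K) :
    (fun x ↦ max (f x - K * g x) 0) = (Iic ξ).indicator fun x ↦ f x - K * g x := by
  funext x
  by_cases hx : x ≤ ξ
  · have : f ξ / g ξ ≤ f x / g x := hfg hx
    rw [hξ, le_div_iff₀ (hg x)] at this
    rw [indicator_of_mem (mem_Iic.mpr hx), max_eq_left (by linarith)]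
  · have : f x / g x ≤ f ξ / g ξ := hfg (le_of_not_ge hx)
    rw [hξ, div_le_iff₀ (hg x)] at this
    rw [indicator_of_notMem (mt mem_Iic.mp hx), max_eq_right (by linarith)]

section BondPrice

variable {ρ φ : ℝ → ℝ} {t : ℝ}

lemma Dfun_sq_half (A x : ℝ) :
    Dfun ρ φ (fun α ↦ α ^ 2 / 2) t A x = ∫ s in Ioi A, ρ s * exp (φ s * x - φ s ^ 2 * t / 2) := by
  simp only [Dfun, div_mul_eq_mul_div]

lemma integral_Ioi_mul_exp_pos {a x : ℝ} (hρ : ∀ s ∈ Ioi a, 0 < ρ s)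
    (hint : IntegrableOn (fun s ↦ ρ s * exp (φ s * x - φ s ^ 2 * t / 2)) (Ioi a)) :
    0 < ∫ s in Ioi a, ρ s * exp (φ s * x - φ s ^ 2 * t / 2) := by
  have hpos : ∀ s ∈ Ioi a, 0 < ρ s * exp (φ s * x - φ s ^ 2 * t / 2) :=
    fun s hs ↦ mul_pos (hρ s hs) (exp_pos _)
  rw [setIntegral_pos_iff_support_of_nonneg_ae
    (ae_restrict_of_forall_mem measurableSet_Ioi fun s hs ↦ (hpos s hs).le) hint,
    inter_eq_right.mpr fun s hs ↦ Function.mem_support.mpr (hpos s hs).ne', Real.volume_Ioi]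
  exact ENNReal.zero_lt_top

lemma integral_Ioi_mul_integral_Ioi_le {w : ℝ → ℝ → ℝ} {a b x y : ℝ} (hab : a ≤ b)
    (hx : IntegrableOn (w x) (Ioi a)) (hy : IntegrableOn (w y) (Ioi a))
    (hw : ∀ s ∈ Ioi b, ∀ u ∈ Ioc a b, w y s * w x u ≤ w x s * w y u) :
    (∫ s in Ioi b, w y s) * (∫ s in Ioi a, w x s)
      ≤ (∫ s in Ioi b, w x s) * ∫ s in Ioi a, w y s := by
  have hsplit : ∀ z, IntegrableOn (w z) (Ioi a) →
      ∫ s in Ioi a, w z s = (∫ s in Ioc a b, w z s) + ∫ s in Ioi b, w z s := fun z hz ↦ by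
    rw [← setIntegral_union (Ioc_disjoint_Ioi le_rfl) measurableSet_Ioi
      (hz.mono_set Ioc_subset_Ioi_self) (hz.mono_set (Ioi_subset_Ioi hab)),
      Ioc_union_Ioi_eq_Ioi hab]
  have hcross : (∫ s in Ioi b, w y s) * (∫ u in Ioc a b, w x u)
      ≤ (∫ s in Ioi b, w x s) * ∫ u in Ioc a b, w y u :=
    integral_mul_integral_le (hy.mono_set (Ioi_subset_Ioi hab)) (hx.mono_set (Ioi_subset_Ioi hab))
      (hx.mono_set Ioc_subset_Ioi_self) (hy.mono_set Ioc_subset_Ioi_self)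
      (ae_restrict_of_forall_mem measurableSet_Ioi fun s hs ↦
        ae_restrict_of_forall_mem measurableSet_Ioc (hw s hs))
  -- the `Ioi b × Ioi b` products cancel, leaving the cross terms
  rw [hsplit x hx, hsplit y hy]
  linarith

lemma Pfun_sq_half_antitone {T : ℝ} (htT : t ≤ T) (hρ : ∀ s ∈ Ioi t, 0 < ρ s)
    (hφ : AntitoneOn φ (Ioi t))
    (hint : ∀ z, IntegrableOn (fun s ↦ ρ s * exp (φ s * z - φ s ^ 2 * t / 2)) (Ioi t)) :
    Antitone (Pfun ρ φ (fun α ↦ α ^ 2 / 2) t T) := by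
  intro x y hxy
  simp only [Pfun, Dfun_sq_half]
  rw [div_le_div_iff₀ (integral_Ioi_mul_exp_pos hρ (hint y)) (integral_Ioi_mul_exp_pos hρ (hint x))]
  refine integral_Ioi_mul_integral_Ioi_le
    (w := fun z s ↦ ρ s * exp (φ s * z - φ s ^ 2 * t / 2)) htT (hint x) (hint y) fun s hs u hu ↦ ?_
  have hφus : φ s ≤ φ u := hφ hu.1 (htT.trans_lt hs) (hu.2.trans hs.le)
  have hρsu : 0 ≤ ρ s * ρ u := (mul_pos (hρ s (htT.trans_lt hs)) (hρ u hu.1)).le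
  calc ρ s * exp (φ s * y - φ s ^ 2 * t / 2) * (ρ u * exp (φ u * x - φ u ^ 2 * t / 2))
      = ρ s * ρ u * exp ((φ s * y - φ s ^ 2 * t / 2) + (φ u * x - φ u ^ 2 * t / 2)) := by
        rw [exp_add]; ring
    _ ≤ ρ s * ρ u * exp ((φ s * x - φ s ^ 2 * t / 2) + (φ u * y - φ u ^ 2 * t / 2)) := by
        refine mul_le_mul_of_nonneg_left (exp_le_exp.mpr ?_) hρsu
        nlinarith [mul_le_mul_of_nonneg_right hφus (sub_nonneg.mpr hxy)]
    _ = ρ s * exp (φ s * x - φ s ^ 2 * t / 2) * (ρ u * exp (φ u * y - φ u ^ 2 * t / 2)) := by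
        rw [exp_add]; ring

end BondPrice

theorem bond_option_price_GBM_general
    (ρ φ : ℝ → ℝ)
    (hρpos : ∀ s : ℝ, 0 < s → 0 < ρ s)
    (hρint : ∫ s in Set.Ioi (0 : ℝ), ρ s = 1)
    (hφc : ContinuousOn φ (Set.Ici 0)) (hφb : ∃ C : ℝ, ∀ s : ℝ, 0 ≤ s → |φ s| ≤ C)
    (hφanti : StrictAntiOn φ (Set.Ici 0))
    (t T K : ℝ) (ht : 0 < t) (htT : t < T)
    (ξstar : ℝ) (hξstar : Pfun ρ φ (fun α => α ^ 2 / 2) t T ξstar = K) :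
    ∫ x, max ((∫ s in Set.Ioi T, ρ s * Real.exp (φ s * x - φ s ^ 2 * t / 2))
          - K * ∫ s in Set.Ioi t, ρ s * Real.exp (φ s * x - φ s ^ 2 * t / 2)) 0
        ∂(gaussianReal 0 t.toNNReal)
      = (∫ s in Set.Ioi T,
            ρ s * stdNormalCDF (ξstar / Real.sqrt t - φ s * Real.sqrt t))
        - K * ∫ s in Set.Ioi t,
            ρ s * stdNormalCDF (ξstar / Real.sqrt t - φ s * Real.sqrt t) := by
  obtain ⟨C, hC⟩ := hφb
  have hρ : ∀ s ∈ Ioi t, 0 < ρ s := fun s hs ↦ hρpos s (ht.trans hs)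
  have hρ0 : IntegrableOn ρ (Ioi 0) := Integrable.of_integral_ne_zero (by simp [hρint])
  have hρt : IntegrableOn ρ (Ioi t) := hρ0.mono_set (Ioi_subset_Ioi ht.le)
  have hφt : AEStronglyMeasurable φ (volume.restrict (Ioi t)) :=
    (hφc.mono (Ioi_subset_Ici ht.le)).aestronglyMeasurable measurableSet_Ioi
  have hTt : Ioi T ⊆ Ioi t := Ioi_subset_Ioi htT.le
  have hint : ∀ z, IntegrableOn (fun s ↦ ρ s * exp (φ s * z - φ s ^ 2 * t / 2)) (Ioi t) :=
    integrable_mul_exp_of_abs_le hρt hφt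
      (ae_restrict_of_forall_mem measurableSet_Ioi fun s hs ↦ hC s (ht.trans hs).le) ht.le
  have hsign := max_sub_mul_eq_indicator (f := Dfun ρ φ (fun α ↦ α ^ 2 / 2) t T)
    (fun x ↦ by rw [Dfun_sq_half]; exact integral_Ioi_mul_exp_pos hρ (hint x))
    (Pfun_sq_half_antitone htT.le hρ (hφanti.antitoneOn.mono (Ioi_subset_Ici ht.le)) hint) hξstar
  simp only [Dfun_sq_half] at hsign
  rw [hsign, integral_indicator measurableSet_Iic,
    integral_sub (integrable_integral_mul_exp (hρt.mono_set hTt) (hφt.mono_set hTt) ht _)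
      ((integrable_integral_mul_exp hρt hφt ht _).const_mul K),
    integral_const_mul, setIntegral_Iic_gaussianReal_integral_mul_exp (hρt.mono_set hTt)
      (hφt.mono_set hTt) ht, setIntegral_Iic_gaussianReal_integral_mul_exp hρt hφt ht]

/-- Bond option pricing formula in the geometric Brownian motion family: with
`ξ*` the critical level solving `P(t,T,ξ*) = K`, the option payoff expectation
is given by the semi-analytic formula involving the normal CDF. -/
theorem bond_option_price_GBM
    (ρ φ : ℝ → ℝ)
    (hρc : ContinuousOn ρ (Set.Ioi 0)) (hρpos : ∀ s : ℝ, 0 < s → 0 < ρ s)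
    (hρint : ∫ s in Set.Ioi (0 : ℝ), ρ s = 1)
    (hφc : ContinuousOn φ (Set.Ici 0)) (hφb : ∃ C : ℝ, ∀ s : ℝ, 0 ≤ s → |φ s| ≤ C)
    (hφpos : ∀ s : ℝ, 0 ≤ s → 0 < φ s) (hφanti : StrictAntiOn φ (Set.Ici 0))
    (t T K : ℝ) (ht : 0 < t) (htT : t < T) (hK : K ∈ Set.Ioo (0 : ℝ) 1)
    (ξstar : ℝ) (hξstar : Pfun ρ φ (fun α => α ^ 2 / 2) t T ξstar = K) :
    ∫ x, max ((∫ s in Set.Ioi T, ρ s * Real.exp (φ s * x - φ s ^ 2 * t / 2))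
          - K * ∫ s in Set.Ioi t, ρ s * Real.exp (φ s * x - φ s ^ 2 * t / 2)) 0
        ∂(gaussianReal 0 t.toNNReal)
      = (∫ s in Set.Ioi T,
            ρ s * stdNormalCDF (ξstar / Real.sqrt t - φ s * Real.sqrt t))
        - K * ∫ s in Set.Ioi t,
            ρ s * stdNormalCDF (ξstar / Real.sqrt t - φ s * Real.sqrt t) :=
  bond_option_price_GBM_general ρ φ hρpos hρint hφc hφb hφanti t T K ht htT ξstar hξstar
end

section
/- Let ρ : (0,∞) → (0,∞) be continuous with ∫_0^∞ ρ_s ds = 1, let φ : [0,∞) → ℝ be continuous, bounded, strictly increasing, and satisfy φ_s < 0 for all s. Let m > 0, κ > 0, 0 < t < T, K ∈ (0,1), and suppose ξ* > 0 satisfies P_γ(t,T,ξ*) = K, where P_γ(t,T,ξ) = (∫_T^∞ ρ_s (1 − κφ_s)^{mt} e^{φ_s ξ} ds)/(∫_t^∞ ρ_s (1 − κφ_s)^{mt} e^{φ_s ξ} ds). Let ν be the Gamma distribution with shape mt and scale κ. Then ∫_0^∞ max(∫_T^∞ ρ_s (1 − κφ_s)^{mt} e^{φ_s u} ds − K ∫_t^∞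 ρ_s (1 − κφ_s)^{mt} e^{φ_s u} ds, 0) dν(u) = ∫_T^∞ ρ_s Γ(mt, ξ*(κ^{−1} − φ_s)) ds − K ∫_t^∞ ρ_s Γ(mt, ξ*(κ^{−1} − φ_s)) ds, where Γ(a,x) = (1/Γ(a)) ∫_x^∞ v^{a−1} e^{−v} dv is the normalized upper incomplete gamma function. -/
/-!
Write `w s = ρ s (1 - κ φ s)^(m t)`. The payoff `f u = ∫_T^∞ w e^{φ u} - K ∫_t^∞ w e^{φ u}`
changes sign only at `ξ*`: `e^{-φ_T u} f u = ∫_t^∞ (1_{s > T} - K) w_s e^{(φ_s - φ_T) u} ds`,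
and since `φ` is increasing every integrand is nondecreasing in `u`. Hence `max (f u) 0` is
`f u` on `[ξ*, ∞)` and `0` before, and by Fubini each `s` contributes the truncated moment
generating function `∫_{ξ*}^∞ e^{φ_s u} dν = (1 - κ φ_s)^{-m t} Γ(m t, ξ* (κ⁻¹ - φ_s))`,
whose prefactor cancels the one in `w s`.
-/

open MeasureTheory ProbabilityTheory Real

/-- The normalized upper incomplete gamma function
`Γ(a, x) = (1/Γ a) ∫_x^∞ v^(a-1) e^(-v) dv`. -/
noncomputable def upperIncGamma (a x : ℝ) : ℝ :=
  (Real.Gamma a)⁻¹ * ∫ v in Set.Ioi x, v ^ (a - 1) * Real.exp (-v)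

/-- The bond price function in the geometric gamma model. -/
noncomputable def PgammaFun (ρ φ : ℝ → ℝ) (m κ t T ξ : ℝ) : ℝ :=
  (∫ s in Set.Ioi T, ρ s * (1 - κ * φ s) ^ (m * t) * Real.exp (φ s * ξ)) /
    ∫ s in Set.Ioi t, ρ s * (1 - κ * φ s) ^ (m * t) * Real.exp (φ s * ξ)

open Set

lemma setIntegral_gammaMeasure {a r : ℝ} (ha : 0 < a) (hr : 0 < r) (f : ℝ → ℝ) {s : Set ℝ}
    (hs : MeasurableSet s) :
    ∫ u in s, f u ∂gammaMeasure a r = ∫ u in s, gammaPDFReal a r u * f u := by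
  rw [gammaMeasure, setIntegral_withDensity_eq_setIntegral_toReal_smul (f := gammaPDF a r)
    (measurable_gammaPDFReal a r).ennreal_ofReal
    (ae_of_all _ fun _ => ENNReal.ofReal_lt_top) _ hs]
  simp only [gammaPDF, ENNReal.toReal_ofReal (gammaPDFReal_nonneg ha hr _), smul_eq_mul]

lemma setIntegral_Ioi_rpow_mul_exp_neg_mul {a b x₀ : ℝ} (hb : 0 < b) (hx₀ : 0 ≤ x₀) :
    ∫ u in Ioi x₀, u ^ (a - 1) * exp (-(b * u))
      = b ^ (-a) * ∫ v in Ioi (b * x₀), v ^ (a - 1) * exp (-v) := by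
  have hb_pow : b ^ (-a) * (b * b ^ (a - 1)) = 1 := by
    rw [mul_comm b, ← rpow_add_one hb.ne', ← rpow_add hb]
    simp
  have hscale : ∀ u ∈ Ioi x₀, u ^ (a - 1) * exp (-(b * u))
      = b ^ (-a) * (b * ((b * u) ^ (a - 1) * exp (-(b * u)))) := by
    intro u hu
    rw [mul_rpow hb.le (hx₀.trans (le_of_lt hu))]
    linear_combination (-(u ^ (a - 1) * exp (-(b * u)))) * hb_pow
  rw [setIntegral_congr_fun measurableSet_Ioi hscale, integral_const_mul, integral_const_mul,
    ← integral_comp_mul_left_Ioi' (fun v => v ^ (a - 1) * exp (-v)) x₀ hb, smul_eq_mul]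

lemma setIntegral_Ici_exp_mul_gammaMeasure {a r c x₀ : ℝ} (ha : 0 < a) (hr : 0 < r)
    (hc : c < r) (hx₀ : 0 ≤ x₀) :
    ∫ u in Ici x₀, exp (c * u) ∂gammaMeasure a r
      = (r / (r - c)) ^ a * upperIncGamma a (x₀ * (r - c)) := by
  have hrc : 0 < r - c := sub_pos.mpr hc
  have hdensity : ∀ u ∈ Ioi x₀, gammaPDFReal a r u * exp (c * u)
      = r ^ a / Gamma a * (u ^ (a - 1) * exp (-((r - c) * u))) := by
    intro u hu
    rw [gammaPDFReal, if_pos (hx₀.trans (le_of_lt hu)), mul_assoc, mul_assoc, ← exp_add]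
    ring_nf
  rw [setIntegral_gammaMeasure ha hr _ measurableSet_Ici, integral_Ici_eq_integral_Ioi,
    setIntegral_congr_fun measurableSet_Ioi hdensity, integral_const_mul,
    setIntegral_Ioi_rpow_mul_exp_neg_mul hrc hx₀, upperIncGamma, div_rpow hr.le hrc.le,
    rpow_neg hrc.le, mul_comm x₀]
  field_simp

lemma IntegrableOn.mul_exp_mul {w φ : ℝ → ℝ} {S : Set ℝ} (hS : MeasurableSet S)
    (hw : IntegrableOn w S) (hφ : AEMeasurable φ (volume.restrict S)) {C : ℝ}
    (hC : ∀ s ∈ S, |φ s| ≤ C) (u : ℝ) :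
    IntegrableOn (fun s => w s * exp (φ s * u)) S := by
  refine hw.mul_bdd (c := exp (C * |u|)) (hφ.mul_const u).exp.aestronglyMeasurable
    (ae_restrict_of_forall_mem hS fun s hs => ?_)
  rw [norm_of_nonneg (exp_pos _).le, exp_le_exp]
  calc φ s * u ≤ |φ s| * |u| := (le_abs_self _).trans (abs_mul _ _).le
    _ ≤ C * |u| := mul_le_mul_of_nonneg_right (hC s hs) (abs_nonneg u)

lemma integrable_prod_mul_exp {μ : Measure ℝ} [IsFiniteMeasure μ] {w φ : ℝ → ℝ} {S : Set ℝ}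
    (hS : MeasurableSet S) (hw : IntegrableOn w S) (hφ : AEMeasurable φ (volume.restrict S))
    (hφ_nonpos : ∀ s ∈ S, φ s ≤ 0) (hμ : ∀ᵐ u ∂μ, 0 ≤ u) :
    Integrable (fun p : ℝ × ℝ => w p.2 * exp (φ p.2 * p.1)) (μ.prod (volume.restrict S)) := by
  refine (hw.comp_snd μ).mul_bdd (c := 1)
    (hφ.comp_snd.mul measurable_fst.aemeasurable).exp.aestronglyMeasurable ?_
  filter_upwards [Measure.quasiMeasurePreserving_fst.ae hμ,
    Measure.quasiMeasurePreserving_snd.ae (ae_restrict_of_forall_mem hS hφ_nonpos)] with p hu hs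
  rw [norm_of_nonneg (exp_pos _).le, exp_le_one_iff]
  exact mul_nonpos_of_nonpos_of_nonneg hs hu

lemma setIntegral_Ici_integral_mul_exp_gammaMeasure {a r ξ : ℝ} (ha : 0 < a) (hr : 0 < r)
    (hξ : 0 ≤ ξ) {w φ : ℝ → ℝ} {S : Set ℝ} (hS : MeasurableSet S) (hw : IntegrableOn w S)
    (hφ : AEMeasurable φ (volume.restrict S)) (hφ_nonpos : ∀ s ∈ S, φ s ≤ 0) :
    Integrable (fun u => ∫ s in S, w s * exp (φ s * u)) ((gammaMeasure a r).restrict (Ici ξ)) ∧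
    ∫ u in Ici ξ, (∫ s in S, w s * exp (φ s * u)) ∂gammaMeasure a r
      = ∫ s in S, w s * ((r / (r - φ s)) ^ a * upperIncGamma a (ξ * (r - φ s))) := by
  have := isProbabilityMeasure_gammaMeasure ha hr
  have hint := integrable_prod_mul_exp (μ := (gammaMeasure a r).restrict (Ici ξ)) hS hw hφ
    hφ_nonpos (ae_restrict_of_forall_mem measurableSet_Ici fun u hu => hξ.trans hu)
  refine ⟨hint.integral_prod_left, ?_⟩
  rw [integral_integral_swap hint]
  refine setIntegral_congr_fun hS fun s hs => ?_
  rw [integral_const_mul,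
    setIntegral_Ici_exp_mul_gammaMeasure ha hr ((hφ_nonpos s hs).trans_lt hr) hξ]

lemma monotone_const_mul_exp_mul {c k : ℝ} (h : 0 ≤ c * k) :
    Monotone fun u => c * exp (k * u) := by
  intro u v huv
  rcases mul_nonneg_iff.mp h with ⟨hc, hk⟩ | ⟨hc, hk⟩
  · exact mul_le_mul_of_nonneg_left (exp_le_exp.mpr (mul_le_mul_of_nonneg_left huv hk)) hc
  · exact mul_le_mul_of_nonpos_left (exp_le_exp.mpr (mul_le_mul_of_nonpos_left huv hk)) hc

lemma monotone_integral_of_ae_monotone {α : Type*} [MeasurableSpace α] {μ : Measure α}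
    {F : ℝ → α → ℝ} (hF : ∀ u, Integrable (F u) μ) (hmono : ∀ᵐ s ∂μ, Monotone fun u => F u s) :
    Monotone fun u => ∫ s, F u s ∂μ :=
  fun _ _ huv => integral_mono_ae (hF _) (hF _) (hmono.mono fun _ hs => hs huv)

lemma max_zero_eq_indicator_Ici {f g : ℝ → ℝ} {ξ : ℝ} (hg : ∀ u, 0 < g u)
    (hmono : Monotone fun u => g u * f u) (hξ : f ξ = 0) (u : ℝ) :
    max (f u) 0 = (Ici ξ).indicator f u := by
  by_cases hu : ξ ≤ u
  · have : g ξ * f ξ ≤ g u * f u := hmono hu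
    rw [indicator_of_mem (mem_Ici.mpr hu), max_eq_left]
    rw [hξ, mul_zero] at this
    exact (mul_nonneg_iff_of_pos_left (hg u)).mp this
  · have : g u * f u ≤ g ξ * f ξ := hmono (le_of_not_ge hu)
    rw [indicator_of_notMem (notMem_Ici.mpr (lt_of_not_ge hu)), max_eq_right]
    rw [hξ, mul_zero] at this
    exact nonpos_of_mul_nonpos_right this (hg u)

lemma monotone_exp_mul_payoff {w φ : ℝ → ℝ} {t T K : ℝ} (htT : t < T) (hK₀ : 0 ≤ K)
    (hK₁ : K ≤ 1) (hw : ∀ s ∈ Ioi t, 0 ≤ w s) (hφ : MonotoneOn φ (Ioi t))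
    (hint : ∀ u, IntegrableOn (fun s => w s * exp (φ s * u)) (Ioi t)) :
    Monotone fun u => exp (-φ T * u) *
      ((∫ s in Ioi T, w s * exp (φ s * u)) - K * ∫ s in Ioi t, w s * exp (φ s * u)) := by
  set F : ℝ → ℝ → ℝ := fun u s => exp (-φ T * u) *
    ((Ioi T).indicator (fun s => w s * exp (φ s * u)) s - K * (w s * exp (φ s * u)))
  have hF_int : ∀ u, IntegrableOn (F u) (Ioi t) := fun u =>
    (((hint u).indicator measurableSet_Ioi).sub ((hint u).const_mul K)).const_mul _
  have hF_eq : ∀ u, ∫ s in Ioi t, F u s = exp (-φ T * u) *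
      ((∫ s in Ioi T, w s * exp (φ s * u)) - K * ∫ s in Ioi t, w s * exp (φ s * u)) := by
    intro u
    rw [integral_const_mul, integral_sub ((hint u).indicator measurableSet_Ioi)
      ((hint u).const_mul K), integral_const_mul, setIntegral_indicator measurableSet_Ioi,
      Ioi_inter_Ioi, max_eq_right htT.le]
  have hF_mono : ∀ s ∈ Ioi t, Monotone fun u => F u s := by
    intro s hs
    have hF : (fun u => F u s) = fun u =>
        (((Ioi T).indicator 1 s - K) * w s) * exp ((φ s - φ T) * u) := by
      ext u
      simp only [F, indicator_apply, Pi.one_apply]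
      rw [show (φ s - φ T) * u = -φ T * u + φ s * u by ring, exp_add]
      split_ifs <;> ring
    rw [hF]
    refine monotone_const_mul_exp_mul ?_
    by_cases hsT : T < s
    · rw [indicator_of_mem (mem_Ioi.mpr hsT), Pi.one_apply]
      exact mul_nonneg (mul_nonneg (sub_nonneg.mpr hK₁) (hw s hs))
        (sub_nonneg.mpr (hφ htT hs hsT.le))
    · rw [indicator_of_notMem (notMem_Ioi.mpr (le_of_not_gt hsT)), zero_sub]
      exact mul_nonneg_of_nonpos_of_nonpos
        (mul_nonpos_of_nonpos_of_nonneg (neg_nonpos.mpr hK₀) (hw s hs))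
        (sub_nonpos.mpr (hφ hs htT (le_of_not_gt hsT)))
  simpa only [hF_eq] using monotone_integral_of_ae_monotone hF_int
    (ae_restrict_of_forall_mem measurableSet_Ioi hF_mono)

theorem integral_max_payoff_gammaMeasure {a r ξ t T K : ℝ} {w φ : ℝ → ℝ} (ha : 0 < a)
    (hr : 0 < r) (hξ : 0 ≤ ξ) (htT : t < T) (hK₀ : 0 ≤ K) (hK₁ : K ≤ 1)
    (hw : IntegrableOn w (Ioi t)) (hw_nonneg : ∀ s ∈ Ioi t, 0 ≤ w s)
    (hφ : MonotoneOn φ (Ici t)) (hφ_nonpos : ∀ s ∈ Ioi t, φ s ≤ 0)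
    (hpayoff : (∫ s in Ioi T, w s * exp (φ s * ξ)) - K * ∫ s in Ioi t, w s * exp (φ s * ξ) = 0) :
    ∫ u, max ((∫ s in Ioi T, w s * exp (φ s * u)) - K * ∫ s in Ioi t, w s * exp (φ s * u)) 0
        ∂gammaMeasure a r
      = (∫ s in Ioi T, w s * ((r / (r - φ s)) ^ a * upperIncGamma a (ξ * (r - φ s))))
        - K * ∫ s in Ioi t, w s * ((r / (r - φ s)) ^ a * upperIncGamma a (ξ * (r - φ s))) := by
  have hφ_Ioi : MonotoneOn φ (Ioi t) := hφ.mono Ioi_subset_Ici_self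
  have hφ_meas : AEMeasurable φ (volume.restrict (Ioi t)) :=
    aemeasurable_restrict_of_monotoneOn measurableSet_Ioi hφ_Ioi
  have hφ_abs : ∀ s ∈ Ioi t, |φ s| ≤ -φ t := fun s hs => by
    rw [abs_of_nonpos (hφ_nonpos s hs), neg_le_neg_iff]
    exact hφ self_mem_Ici (Ioi_subset_Ici_self hs) (le_of_lt hs)
  have hmax := max_zero_eq_indicator_Ici (fun u => exp_pos _)
    (monotone_exp_mul_payoff htT hK₀ hK₁ hw_nonneg hφ_Ioi
      (IntegrableOn.mul_exp_mul measurableSet_Ioi hw hφ_meas hφ_abs)) hpayoff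
  have hTt : Ioi T ⊆ Ioi t := Ioi_subset_Ioi htT.le
  obtain ⟨hA_int, hA⟩ := setIntegral_Ici_integral_mul_exp_gammaMeasure ha hr hξ measurableSet_Ioi
    (hw.mono_set hTt) (hφ_meas.mono_set hTt) fun s hs => hφ_nonpos s (hTt hs)
  obtain ⟨hB_int, hB⟩ := setIntegral_Ici_integral_mul_exp_gammaMeasure ha hr hξ measurableSet_Ioi
    hw hφ_meas hφ_nonpos
  rw [integral_congr_ae (ae_of_all _ hmax), integral_indicator measurableSet_Ici,
    integral_sub hA_int (hB_int.const_mul K), integral_const_mul, hA, hB]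

lemma integrableOn_mul_one_sub_mul_rpow {ρ φ : ℝ → ℝ} {S : Set ℝ} {κ a c : ℝ}
    (hS : MeasurableSet S) (hρ : IntegrableOn ρ S) (hφ : AEMeasurable φ (volume.restrict S))
    (hκ : 0 ≤ κ) (ha : 0 ≤ a) (hφ_bdd : ∀ s ∈ S, c ≤ φ s ∧ φ s ≤ 0) :
    IntegrableOn (fun s => ρ s * (1 - κ * φ s) ^ a) S := by
  refine hρ.mul_bdd (c := (1 - κ * c) ^ a)
    (((hφ.const_mul κ).const_sub 1).pow_const a).aestronglyMeasurable
    (ae_restrict_of_forall_mem hS fun s hs => ?_)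
  obtain ⟨hcs, hs0⟩ := hφ_bdd s hs
  have hbase : 0 ≤ 1 - κ * φ s := by nlinarith
  rw [norm_of_nonneg (rpow_nonneg hbase a)]
  exact rpow_le_rpow hbase (by nlinarith) ha

lemma one_sub_mul_rpow_mul_inv_div_sub_rpow {κ c : ℝ} (a : ℝ) (hκ : 0 < κ)
    (hc : 0 < 1 - κ * c) :
    (1 - κ * c) ^ a * (κ⁻¹ / (κ⁻¹ - c)) ^ a = 1 := by
  have hκc : 0 < κ⁻¹ - c := by
    rw [← mul_lt_mul_iff_right₀ hκ, mul_zero, mul_sub, mul_inv_cancel₀ hκ.ne']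
    exact hc
  rw [← mul_rpow hc.le (div_pos (inv_pos.mpr hκ) hκc).le]
  have := hc.ne'
  field_simp
  exact one_rpow a

lemma sub_mul_eq_zero_of_div_eq {a b K : ℝ} (h : a / b = K) (hK : K ≠ 0) : a - K * b = 0 := by
  have hb : b ≠ 0 := fun hb => hK (by rw [← h, hb, div_zero])
  rw [← h, div_mul_cancel₀ a hb, sub_self]

theorem bond_option_price_gamma_general
    (ρ φ : ℝ → ℝ)
    (hρpos : ∀ s : ℝ, 0 < s → 0 < ρ s)
    (hρint : ∫ s in Set.Ioi (0 : ℝ), ρ s = 1)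
    (hφmono : StrictMonoOn φ (Set.Ici 0)) (hφneg : ∀ s : ℝ, 0 ≤ s → φ s < 0)
    (m κ t T K : ℝ) (hm : 0 < m) (hκ : 0 < κ)
    (ht : 0 < t) (htT : t < T) (hK : K ∈ Set.Ioo (0 : ℝ) 1)
    (ξstar : ℝ) (hξpos : 0 < ξstar) (hξstar : PgammaFun ρ φ m κ t T ξstar = K) :
    ∫ u, max ((∫ s in Set.Ioi T, ρ s * (1 - κ * φ s) ^ (m * t) * Real.exp (φ s * u))
          - K * ∫ s in Set.Ioi t, ρ s * (1 - κ * φ s) ^ (m * t) * Real.exp (φ s * u)) 0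
        ∂(gammaMeasure (m * t) κ⁻¹)
      = (∫ s in Set.Ioi T, ρ s * upperIncGamma (m * t) (ξstar * (κ⁻¹ - φ s)))
        - K * ∫ s in Set.Ioi t, ρ s * upperIncGamma (m * t) (ξstar * (κ⁻¹ - φ s)) := by
  have hIci : Ici t ⊆ Ici 0 := Ici_subset_Ici.mpr ht.le
  have hφ : MonotoneOn φ (Ici t) := hφmono.monotoneOn.mono hIci
  have hφ_neg : ∀ s ∈ Ioi t, φ s < 0 := fun s hs => hφneg s (hIci (Ioi_subset_Ici_self hs))
  have hbase : ∀ s ∈ Ioi t, 0 < 1 - κ * φ s := fun s hs => by nlinarith [hφ_neg s hs]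
  have hρ : IntegrableOn ρ (Ioi t) :=
    IntegrableOn.mono_set (Integrable.of_integral_ne_zero (hρint ▸ one_ne_zero))
      (Ioi_subset_Ioi ht.le)
  have hw := integrableOn_mul_one_sub_mul_rpow measurableSet_Ioi hρ
    (aemeasurable_restrict_of_monotoneOn measurableSet_Ioi (hφ.mono Ioi_subset_Ici_self))
    hκ.le (mul_pos hm ht).le fun s hs =>
      ⟨hφ self_mem_Ici (Ioi_subset_Ici_self hs) (le_of_lt hs), (hφ_neg s hs).le⟩
  have hw_nonneg : ∀ s ∈ Ioi t, 0 ≤ ρ s * (1 - κ * φ s) ^ (m * t) := fun s hs =>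
    mul_nonneg (hρpos s (ht.trans hs)).le (rpow_nonneg (hbase s hs).le _)
  have hcancel : ∀ s ∈ Ioi t, ρ s * (1 - κ * φ s) ^ (m * t) * ((κ⁻¹ / (κ⁻¹ - φ s)) ^ (m * t)
      * upperIncGamma (m * t) (ξstar * (κ⁻¹ - φ s)))
      = ρ s * upperIncGamma (m * t) (ξstar * (κ⁻¹ - φ s)) := fun s hs => by
    rw [mul_assoc, ← mul_assoc (_ ^ _),
      one_sub_mul_rpow_mul_inv_div_sub_rpow _ hκ (hbase s hs), one_mul]
  rw [integral_max_payoff_gammaMeasure (mul_pos hm ht) (inv_pos.mpr hκ) hξpos.le htT hK.1.le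
      hK.2.le hw hw_nonneg hφ (fun s hs => (hφ_neg s hs).le)
      (sub_mul_eq_zero_of_div_eq hξstar hK.1.ne'),
    setIntegral_congr_fun measurableSet_Ioi fun s hs => hcancel s (Ioi_subset_Ioi htT.le hs),
    setIntegral_congr_fun measurableSet_Ioi hcancel]

/-- Bond option pricing formula in the geometric gamma family: with `ξ* > 0`
solving `P_γ(t,T,ξ*) = K`, the option payoff expectation under the Gamma
distribution with shape `m t` and scale `κ` (i.e. rate `κ⁻¹`) is given by the
semi-analytic formula involving the normalized upper incomplete gamma
function. -/
theorem bond_option_price_gamma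
    (ρ φ : ℝ → ℝ)
    (hρc : ContinuousOn ρ (Set.Ioi 0)) (hρpos : ∀ s : ℝ, 0 < s → 0 < ρ s)
    (hρint : ∫ s in Set.Ioi (0 : ℝ), ρ s = 1)
    (hφc : ContinuousOn φ (Set.Ici 0)) (hφb : ∃ C : ℝ, ∀ s : ℝ, 0 ≤ s → |φ s| ≤ C)
    (hφmono : StrictMonoOn φ (Set.Ici 0)) (hφneg : ∀ s : ℝ, 0 ≤ s → φ s < 0)
    (m κ t T K : ℝ) (hm : 0 < m) (hκ : 0 < κ)
    (ht : 0 < t) (htT : t < T) (hK : K ∈ Set.Ioo (0 : ℝ) 1)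
    (ξstar : ℝ) (hξpos : 0 < ξstar) (hξstar : PgammaFun ρ φ m κ t T ξstar = K) :
    ∫ u, max ((∫ s in Set.Ioi T, ρ s * (1 - κ * φ s) ^ (m * t) * Real.exp (φ s * u))
          - K * ∫ s in Set.Ioi t, ρ s * (1 - κ * φ s) ^ (m * t) * Real.exp (φ s * u)) 0
        ∂(gammaMeasure (m * t) κ⁻¹)
      = (∫ s in Set.Ioi T, ρ s * upperIncGamma (m * t) (ξstar * (κ⁻¹ - φ s)))
        - K * ∫ s in Set.Ioi t, ρ s * upperIncGamma (m * t) (ξstar * (κ⁻¹ - φ s)) :=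
  bond_option_price_gamma_general ρ φ hρpos hρint hφmono hφneg m κ t T K hm hκ ht htT hK ξstar hξpos
    hξstar
end
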